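/- For 0 < q < 1 and all x ∈ ℂ: S_q(x) = -∑_{k=1}^∞ (-1)^{k-1} q^{k(k+1)/2}(1 - x^k)/((1-q^k)(q;q)_k). -/

import Mathlib

noncomputable def qPoch (q x : ℂ) (k : ℕ) : ℂ := ∏ j ∈ Finset.range k, (1 - x * q ^ j)

noncomputable def Sq (q : ℝ) (x : ℂ) : ℂ :=
  -∑' k : ℕ, ((q : ℂ) ^ (k + 1) / (1 - (q : ℂ) ^ (k + 1))) * qPoch q x (k + 1)

/-!
Write `f x = ∑ q^k/(1-q^k) (x;q)_k` and `g x` for the alternating series. Both satisfy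
`f x - f (q x) = (q x; q)_∞ - 1`. For `f` the differences of the terms telescope to the partial
products `(q x; q)_n`. For `g` the differences are the terms of Euler's series
`E z = ∑ (-1)^k q^(k choose 2) z^k / (q;q)_k` at `z = q x`, and `E z = (z;q)_∞` because
`E z = (1 - z) E (q z)` and `E 0 = 1`. So `f - g` is continuous and invariant under `x ↦ q x`,
hence constant, and it vanishes at `x = 1`.
-/

open Filter Topology Finset

theorem apply_eq_apply_zero_of_apply_mul_eq {𝕜 E : Type*} [NormedField 𝕜] [TopologicalSpace E]
    [T2Space E] {h : 𝕜 → E} {q : 𝕜} (hq : ‖q‖ < 1) (hh : ∀ z, h (q * z) = h z)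
    (hc : ContinuousAt h 0) (z : 𝕜) : h z = h 0 := by
  have hpow : ∀ n : ℕ, h (q ^ n * z) = h z := by
    intro n
    induction n with
    | zero => simp
    | succ n ih => rw [pow_succ', mul_assoc, hh, ih]
  have hlim : Tendsto (fun n : ℕ => q ^ n * z) atTop (𝓝 0) := by
    simpa using (tendsto_pow_atTop_nhds_zero_of_norm_lt_one hq).mul_const z
  have hlim' := hc.tendsto.comp hlim
  simp only [Function.comp_def, hpow] at hlim'
  exact tendsto_nhds_unique tendsto_const_nhds hlim'

theorem continuous_tsum_of_norm_le_on_balls {E F : Type*} [SeminormedAddCommGroup E]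
    [NormedAddCommGroup F] [CompleteSpace F] {f : ℕ → E → F} {u : ℝ → ℕ → ℝ}
    (hf : ∀ k, Continuous (f k)) (hu : ∀ R, Summable (u R))
    (hfu : ∀ R k z, ‖z‖ ≤ R → ‖f k z‖ ≤ u R k) : Continuous fun z => ∑' k, f k z := by
  refine continuous_iff_continuousAt.2 fun z => ?_
  have hR : Metric.closedBall (0 : E) (‖z‖ + 1) ∈ 𝓝 z :=
    Metric.closedBall_mem_nhds_of_mem (by simp)
  refine (continuousOn_tsum (fun k => (hf k).continuousOn) (hu (‖z‖ + 1))
    fun k y hy => hfu _ k y ?_).continuousAt hR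
  simpa using hy

theorem summable_pow_choose_two_mul_pow {r : ℝ} (hr0 : 0 ≤ r) (hr1 : r < 1) (c : ℝ) :
    Summable fun k : ℕ => r ^ k.choose 2 * c ^ k := by
  refine summable_of_ratio_norm_eventually_le (r := 1 / 2) (by norm_num) ?_
  have hlim : Tendsto (fun k : ℕ => r ^ k * c) atTop (𝓝 0) := by
    simpa using (tendsto_pow_atTop_nhds_zero_of_lt_one hr0 hr1).mul_const c
  filter_upwards [(hlim.norm.eventually_le_const (by norm_num : ‖(0:ℝ)‖ < 1 / 2))] with k hk
  rw [Nat.choose_succ_succ', Nat.choose_one_right, pow_add,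
    show r ^ k * r ^ k.choose 2 * c ^ (k + 1) = (r ^ k * c) * (r ^ k.choose 2 * c ^ k) by ring,
    norm_mul]
  exact mul_le_mul_of_nonneg_right hk (norm_nonneg _)

section qSeries

variable {q : ℂ}

theorem qPoch_succ (x : ℂ) (k : ℕ) : qPoch q x (k + 1) = qPoch q x k * (1 - x * q ^ k) :=
  prod_range_succ _ k

theorem qPoch_succ' (x : ℂ) (k : ℕ) : qPoch q x (k + 1) = (1 - x) * qPoch q (q * x) k := by
  rw [qPoch, prod_range_succ', pow_zero, mul_one, mul_comm]
  congr 1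
  exact prod_congr rfl fun j _ => by ring

theorem qPoch_one_succ (k : ℕ) : qPoch q 1 (k + 1) = 0 := by
  simp [qPoch_succ']

theorem one_sub_norm_le_norm_one_sub_pow (hq : ‖q‖ < 1) (k : ℕ) :
    1 - ‖q‖ ≤ ‖1 - q ^ (k + 1)‖ :=
  calc 1 - ‖q‖ ≤ 1 - ‖q‖ ^ (k + 1) := by
        gcongr; exact pow_le_of_le_one (norm_nonneg q) hq.le (by omega)
    _ = ‖(1 : ℂ)‖ - ‖q ^ (k + 1)‖ := by simp
    _ ≤ ‖1 - q ^ (k + 1)‖ := norm_sub_norm_le _ _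

theorem one_sub_pow_ne_zero (hq : ‖q‖ < 1) (k : ℕ) : 1 - q ^ (k + 1) ≠ 0 :=
  norm_pos_iff.1 ((sub_pos.2 hq).trans_le (one_sub_norm_le_norm_one_sub_pow hq k))

theorem one_sub_norm_pow_le_norm_qPoch_self (hq : ‖q‖ < 1) (k : ℕ) :
    (1 - ‖q‖) ^ k ≤ ‖qPoch q q k‖ := by
  have := prod_le_prod (s := range k) (f := fun _ => 1 - ‖q‖) (g := fun j => ‖1 - q * q ^ j‖)
    (fun _ _ => (sub_pos.2 hq).le) fun j _ => by
      rw [← pow_succ']; exact one_sub_norm_le_norm_one_sub_pow hq j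
  simpa [qPoch, norm_prod] using this

theorem qPoch_self_ne_zero (hq : ‖q‖ < 1) (k : ℕ) : qPoch q q k ≠ 0 :=
  norm_pos_iff.1 ((pow_pos (sub_pos.2 hq) k).trans_le (one_sub_norm_pow_le_norm_qPoch_self hq k))

theorem norm_qPoch_le (hq : ‖q‖ < 1) (x : ℂ) (k : ℕ) :
    ‖qPoch q x k‖ ≤ Real.exp (‖x‖ / (1 - ‖q‖)) := by
  calc ‖qPoch q x k‖ = ∏ j ∈ range k, ‖1 - x * q ^ j‖ := norm_prod _ _
    _ ≤ ∏ j ∈ range k, Real.exp (‖x‖ * ‖q‖ ^ j) := by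
        refine prod_le_prod (fun j _ => norm_nonneg _) fun j _ => ?_
        calc ‖1 - x * q ^ j‖ ≤ ‖(1 : ℂ)‖ + ‖x * q ^ j‖ := norm_sub_le _ _
          _ = ‖x‖ * ‖q‖ ^ j + 1 := by simp [add_comm]
          _ ≤ _ := Real.add_one_le_exp _
    _ = Real.exp (‖x‖ * ∑ j ∈ range k, ‖q‖ ^ j) := by rw [← Real.exp_sum, mul_sum]
    _ ≤ Real.exp (‖x‖ / (1 - ‖q‖)) := by
        rw [div_eq_mul_one_div]
        gcongr
        simpa using geom_sum_Ico_le_of_lt_one (m := 0) (n := k) (norm_nonneg q) hq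

noncomputable def eulerTerm (q z : ℂ) (k : ℕ) : ℂ := (-1) ^ k * q ^ k.choose 2 * z ^ k / qPoch q q k

noncomputable def eulerSum (q z : ℂ) : ℂ := ∑' k, eulerTerm q z k

theorem eulerTerm_mul_left (z : ℂ) (k : ℕ) : eulerTerm q (q * z) k = q ^ k * eulerTerm q z k := by
  simp only [eulerTerm, mul_pow]
  ring

theorem one_sub_pow_mul_eulerTerm_succ (hq : ‖q‖ < 1) (z : ℂ) (k : ℕ) :
    (1 - q ^ (k + 1)) * eulerTerm q z (k + 1) = -z * eulerTerm q (q * z) k := by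
  have h₁ := one_sub_pow_ne_zero hq k
  have h₂ := qPoch_self_ne_zero hq k
  rw [eulerTerm, eulerTerm, qPoch_succ, ← pow_succ', Nat.choose_succ_succ', Nat.choose_one_right]
  field_simp
  ring

theorem norm_eulerTerm_le (hq : ‖q‖ < 1) {z : ℂ} {R : ℝ} (hz : ‖z‖ ≤ R) (k : ℕ) :
    ‖eulerTerm q z k‖ ≤ ‖q‖ ^ k.choose 2 * (R / (1 - ‖q‖)) ^ k := by
  have h1q : 0 < 1 - ‖q‖ := sub_pos.2 hq
  have hR : 0 ≤ R := (norm_nonneg z).trans hz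
  rw [eulerTerm, norm_div, norm_mul, norm_mul, norm_pow, norm_pow, norm_pow, norm_neg, norm_one,
    one_pow, one_mul, div_pow, ← mul_div_assoc]
  exact div_le_div₀ (by positivity) (by gcongr) (by positivity)
    (one_sub_norm_pow_le_norm_qPoch_self hq k)

theorem summable_eulerTerm (hq : ‖q‖ < 1) (z : ℂ) : Summable (eulerTerm q z) :=
  .of_norm_bounded (summable_pow_choose_two_mul_pow (norm_nonneg q) hq _)
    (norm_eulerTerm_le hq le_rfl)

theorem continuous_eulerSum (hq : ‖q‖ < 1) : Continuous (eulerSum q) :=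
  continuous_tsum_of_norm_le_on_balls (fun k => by unfold eulerTerm; fun_prop)
    (fun R => summable_pow_choose_two_mul_pow (norm_nonneg q) hq _)
    fun _ k _ hz => norm_eulerTerm_le hq hz k

theorem eulerSum_zero : eulerSum q 0 = 1 := by
  rw [eulerSum, tsum_eq_single 0 fun k hk => by simp [eulerTerm, hk]]
  simp [eulerTerm, qPoch]

theorem eulerSum_eq_one_sub_mul (hq : ‖q‖ < 1) (z : ℂ) :
    eulerSum q z = (1 - z) * eulerSum q (q * z) := by
  have hdiff : eulerSum q z - eulerSum q (q * z) = -z * eulerSum q (q * z) := by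
    simp only [eulerSum]
    rw [← (summable_eulerTerm hq z).tsum_sub (summable_eulerTerm hq _),
      ((summable_eulerTerm hq z).sub (summable_eulerTerm hq _)).tsum_eq_zero_add,
      ← tsum_mul_left]
    simp only [eulerTerm_mul_left z, ← one_sub_mul, one_sub_pow_mul_eulerTerm_succ hq]
    simp [eulerTerm]
  linear_combination hdiff

theorem tendsto_qPoch (hq : ‖q‖ < 1) (z : ℂ) :
    Tendsto (fun n => qPoch q z n) atTop (𝓝 (eulerSum q z)) := by
  have hprod : ∀ n, eulerSum q z = qPoch q z n * eulerSum q (q ^ n * z) := by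
    intro n
    induction n with
    | zero => simp [qPoch]
    | succ n ih =>
      rw [ih, eulerSum_eq_one_sub_mul hq (q ^ n * z), qPoch_succ, pow_succ', mul_assoc q]
      ring
  have htail : Tendsto (fun n : ℕ => eulerSum q (q ^ n * z)) atTop (𝓝 1) := by
    rw [← eulerSum_zero (q := q)]
    refine (continuous_eulerSum hq).continuousAt.tendsto.comp ?_
    simpa using (tendsto_pow_atTop_nhds_zero_of_norm_lt_one hq).mul_const z
  have hquot : Tendsto (fun n => eulerSum q z / eulerSum q (q ^ n * z)) atTop
      (𝓝 (eulerSum q z / 1)) := tendsto_const_nhds.div htail one_ne_zero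
  rw [div_one] at hquot
  refine hquot.congr' ?_
  filter_upwards [htail.eventually_ne one_ne_zero] with n hn
  rw [hprod n, mul_div_cancel_right₀ _ hn]

noncomputable def qlogTerm (q x : ℂ) (k : ℕ) : ℂ :=
  q ^ (k + 1) / (1 - q ^ (k + 1)) * qPoch q x (k + 1)

noncomputable def qlogAltTerm (q x : ℂ) (k : ℕ) : ℂ :=
  (-1) ^ k * q ^ ((k + 1) * (k + 2) / 2) * (1 - x ^ (k + 1)) /
    ((1 - q ^ (k + 1)) * qPoch q q (k + 1))

theorem norm_qlogTerm_le (hq : ‖q‖ < 1) {x : ℂ} {R : ℝ} (hx : ‖x‖ ≤ R) (k : ℕ) :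
    ‖qlogTerm q x k‖ ≤ Real.exp (R / (1 - ‖q‖)) / (1 - ‖q‖) * ‖q‖ ^ (k + 1) := by
  have h1q : 0 < 1 - ‖q‖ := sub_pos.2 hq
  rw [qlogTerm, norm_mul, norm_div, norm_pow, div_mul_eq_mul_div, div_mul_eq_mul_div, mul_comm]
  refine div_le_div₀ (by positivity) (mul_le_mul_of_nonneg_right ?_ (by positivity)) h1q
    (one_sub_norm_le_norm_one_sub_pow hq k)
  exact (norm_qPoch_le hq x _).trans (by gcongr)

theorem summable_qlogTerm_bound (hq : ‖q‖ < 1) (R : ℝ) :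
    Summable fun k : ℕ => Real.exp (R / (1 - ‖q‖)) / (1 - ‖q‖) * ‖q‖ ^ (k + 1) :=
  ((summable_nat_add_iff 1).2 (summable_geometric_of_lt_one (norm_nonneg q) hq)).mul_left _

theorem continuous_tsum_qlogTerm (hq : ‖q‖ < 1) : Continuous fun x => ∑' k, qlogTerm q x k :=
  continuous_tsum_of_norm_le_on_balls (fun k => by unfold qlogTerm qPoch; fun_prop)
    (summable_qlogTerm_bound hq) fun _ k _ hx => norm_qlogTerm_le hq hx k

theorem summable_qlogTerm (hq : ‖q‖ < 1) (x : ℂ) : Summable (qlogTerm q x) :=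
  .of_norm_bounded (summable_qlogTerm_bound hq ‖x‖) (norm_qlogTerm_le hq le_rfl)

theorem qlogTerm_sub_qlogTerm_mul (hq : ‖q‖ < 1) (x : ℂ) (k : ℕ) :
    qlogTerm q x k - qlogTerm q (q * x) k = qPoch q (q * x) (k + 1) - qPoch q (q * x) k := by
  have h := one_sub_pow_ne_zero hq k
  rw [qlogTerm, qlogTerm, qPoch_succ', qPoch_succ]
  field_simp
  ring

theorem tsum_qlogTerm_sub_tsum_qlogTerm_mul (hq : ‖q‖ < 1) (x : ℂ) :
    ∑' k, qlogTerm q x k - ∑' k, qlogTerm q (q * x) k = eulerSum q (q * x) - 1 := by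
  have hsum := ((summable_qlogTerm hq x).sub (summable_qlogTerm hq (q * x))).hasSum
  rw [← (summable_qlogTerm hq x).tsum_sub (summable_qlogTerm hq (q * x))]
  refine tendsto_nhds_unique hsum.tendsto_sum_nat ?_
  simp only [qlogTerm_sub_qlogTerm_mul hq, sum_range_sub]
  simpa [qPoch] using (tendsto_qPoch hq (q * x)).sub_const 1

theorem qlogAltTerm_eq (hq : ‖q‖ < 1) (x : ℂ) (k : ℕ) :
    qlogAltTerm q x k =
      (eulerTerm q (q * x) (k + 1) - eulerTerm q q (k + 1)) / (1 - q ^ (k + 1)) := by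
  have h₁ := one_sub_pow_ne_zero hq k
  have h₂ := qPoch_self_ne_zero hq (k + 1)
  have hexp : (k + 1) * (k + 2) / 2 = (k + 1).choose 2 + (k + 1) := by
    rw [Nat.choose_two_right, Nat.add_sub_cancel,
      show (k + 1) * (k + 2) = (k + 1) * k + (k + 1) * 2 by ring, Nat.add_mul_div_right _ _ two_pos]
  rw [qlogAltTerm, eulerTerm, eulerTerm, hexp, pow_add, mul_pow]
  field_simp
  ring

theorem qlogAltTerm_sub_qlogAltTerm_mul (hq : ‖q‖ < 1) (x : ℂ) (k : ℕ) :
    qlogAltTerm q x k - qlogAltTerm q (q * x) k = eulerTerm q (q * x) (k + 1) := by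
  have h := one_sub_pow_ne_zero hq k
  rw [qlogAltTerm_eq hq, qlogAltTerm_eq hq, eulerTerm_mul_left (q * x)]
  field_simp
  ring

theorem norm_qlogAltTerm_le (hq : ‖q‖ < 1) {x : ℂ} {R : ℝ} (hx : ‖x‖ ≤ R) (k : ℕ) :
    ‖qlogAltTerm q x k‖ ≤ (‖q‖ ^ (k + 1).choose 2 * (R / (1 - ‖q‖)) ^ (k + 1) +
      ‖q‖ ^ (k + 1).choose 2 * (1 / (1 - ‖q‖)) ^ (k + 1)) / (1 - ‖q‖) := by
  have hR : 0 ≤ R := (norm_nonneg x).trans hx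
  have hqx : ‖q * x‖ ≤ R := by
    rw [norm_mul]
    exact (mul_le_of_le_one_left (norm_nonneg x) hq.le).trans hx
  rw [qlogAltTerm_eq hq, norm_div]
  refine div_le_div₀ (by positivity) ((norm_sub_le _ _).trans (add_le_add
    (norm_eulerTerm_le hq hqx _) (norm_eulerTerm_le hq hq.le _))) (sub_pos.2 hq)
    (one_sub_norm_le_norm_one_sub_pow hq k)

theorem summable_qlogAltTerm_bound (hq : ‖q‖ < 1) (R : ℝ) :
    Summable fun k : ℕ => (‖q‖ ^ (k + 1).choose 2 * (R / (1 - ‖q‖)) ^ (k + 1) +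
      ‖q‖ ^ (k + 1).choose 2 * (1 / (1 - ‖q‖)) ^ (k + 1)) / (1 - ‖q‖) := by
  have hs := fun c => (summable_nat_add_iff 1).2
    (summable_pow_choose_two_mul_pow (norm_nonneg q) hq c)
  exact ((hs _).add (hs _)).div_const _

theorem continuous_tsum_qlogAltTerm (hq : ‖q‖ < 1) :
    Continuous fun x => ∑' k, qlogAltTerm q x k :=
  continuous_tsum_of_norm_le_on_balls (fun k => by unfold qlogAltTerm qPoch; fun_prop)
    (summable_qlogAltTerm_bound hq) fun _ k _ hx => norm_qlogAltTerm_le hq hx k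

theorem summable_qlogAltTerm (hq : ‖q‖ < 1) (x : ℂ) : Summable (qlogAltTerm q x) :=
  .of_norm_bounded (summable_qlogAltTerm_bound hq ‖x‖) (norm_qlogAltTerm_le hq le_rfl)

theorem tsum_qlogAltTerm_sub_tsum_qlogAltTerm_mul (hq : ‖q‖ < 1) (x : ℂ) :
    ∑' k, qlogAltTerm q x k - ∑' k, qlogAltTerm q (q * x) k = eulerSum q (q * x) - 1 := by
  rw [← (summable_qlogAltTerm hq x).tsum_sub (summable_qlogAltTerm hq (q * x)), eulerSum,
    (summable_eulerTerm hq _).tsum_eq_zero_add]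
  simp [qlogAltTerm_sub_qlogAltTerm_mul hq, eulerTerm, qPoch]

theorem tsum_qlogTerm_eq_tsum_qlogAltTerm (hq : ‖q‖ < 1) (x : ℂ) :
    ∑' k, qlogTerm q x k = ∑' k, qlogAltTerm q x k := by
  set h : ℂ → ℂ := fun x => ∑' k, qlogTerm q x k - ∑' k, qlogAltTerm q x k with h_def
  have hinv : ∀ z, h (q * z) = h z := fun z => by
    simp only [h_def]
    linear_combination tsum_qlogAltTerm_sub_tsum_qlogAltTerm_mul hq z -
      tsum_qlogTerm_sub_tsum_qlogTerm_mul hq z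
  have hcont : ContinuousAt h 0 :=
    ((continuous_tsum_qlogTerm hq).sub (continuous_tsum_qlogAltTerm hq)).continuousAt
  have hone : h 1 = 0 := by simp [h_def, qlogTerm, qlogAltTerm, qPoch_one_succ]
  have hconst := apply_eq_apply_zero_of_apply_mul_eq hq hinv hcont
  exact sub_eq_zero.1 ((hconst x).trans ((hconst 1).symm.trans hone))

end qSeries

theorem qlog_alternating_expansion (q : ℝ) (hq0 : 0 < q) (hq1 : q < 1) (x : ℂ) :
    Sq q x = -∑' k : ℕ, (-1 : ℂ) ^ k * (q : ℂ) ^ ((k + 1) * (k + 2) / 2) * (1 - x ^ (k + 1)) /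
      ((1 - (q : ℂ) ^ (k + 1)) * qPoch q (q : ℂ) (k + 1)) := by
  have hq : ‖(q : ℂ)‖ < 1 := by rwa [Complex.norm_real, Real.norm_of_nonneg hq0.le]
  exact congrArg Neg.neg (tsum_qlogTerm_eq_tsum_qlogAltTerm hq x)
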